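/- Let p ≥ 7 be a prime and r ≥ 4 be even. Then every sequence of 5 elements in Z/p^rZ has a subsequence of consecutive terms which is an S(p^r)*-weighted zero-sum sequence; that is, C_{S(p^r)*} ≤ 5. -/

import Mathlib

/-- The set of squares of units of `ZMod n`. -/
def unitSquares (n : ℕ) : Set (ZMod n) :=
  {x | ∃ u : (ZMod n)ˣ, (u : ZMod n) ^ 2 = x}

/-- The set of nonzero squares of `ZMod n`. -/
def nonzeroSquares (n : ℕ) : Set (ZMod n) :=
  {x | x ≠ 0 ∧ ∃ y : ZMod n, y ^ 2 = x}

/-- A (nonempty) sequence is an `A`-weighted zero-sum sequence. -/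
def IsWeightedZeroSum {n k : ℕ} (A : Set (ZMod n)) (x : Fin k → ZMod n) : Prop :=
  0 < k ∧ ∃ w : Fin k → ZMod n, (∀ i, w i ∈ A) ∧ ∑ i, w i * x i = 0

/-- The sequence `x` has an `A`-weighted zero-sum subsequence. -/
def HasWZSSubseq {n k : ℕ} (A : Set (ZMod n)) (x : Fin k → ZMod n) : Prop :=
  ∃ I : Finset (Fin k), I.Nonempty ∧ ∃ w : Fin k → ZMod n,
    (∀ i ∈ I, w i ∈ A) ∧ ∑ i ∈ I, w i * x i = 0

/-- The sequence `x` has an `A`-weighted zero-sum subsequence of consecutive terms. -/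
def HasConsecWZS {n k : ℕ} (A : Set (ZMod n)) (x : Fin k → ZMod n) : Prop :=
  ∃ i j : Fin k, i ≤ j ∧ ∃ w : Fin k → ZMod n,
    (∀ t ∈ Finset.Icc i j, w t ∈ A) ∧ ∑ t ∈ Finset.Icc i j, w t * x t = 0

/-- `k` is admissible for the `A`-weighted Davenport constant of `ZMod n`. -/
def DConst (n : ℕ) (A : Set (ZMod n)) (k : ℕ) : Prop :=
  0 < k ∧ ∀ x : Fin k → ZMod n, HasWZSSubseq A x

/-- `k` is admissible for the constant `C_A` of `ZMod n`. -/
def CConst (n : ℕ) (A : Set (ZMod n)) (k : ℕ) : Prop :=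
  0 < k ∧ ∀ x : Fin k → ZMod n, HasConsecWZS A x

/-!
If some term is divisible by `p ^ 2`, it is killed by `p ^ (r - 2)`, a nonzero square because `r`
is even. Otherwise every term is a unit or `p` times a unit, so three of the five terms have the
same shape `π * uᵢ` with `π ∈ {1, p}` and `uᵢ` a unit. Give every other term the weight `1`,
resp. `p ^ (r - 2)`, so that these contribute `π * s`; it remains to solve
`u₁ α² + u₂ β² + u₃ γ² = -s` with units `α, β, γ`. Modulo `p` this follows from Cauchy–Davenport,
as each set `{u x² | x ≠ 0}` has at least `(p - 1) / 2` elements and `p ≥ 7`; Hensel's lemma lifts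
the solution to `ZMod (p ^ r)`.
-/

open Finset Pointwise

theorem IsCoprime.exists_dvd_sub_and_pow_dvd_mul_sq_sub {R : Type*} [CommRing R] {π a e x : R}
    (hx : IsCoprime (2 * a * x) π) (he : π ∣ a * x ^ 2 - e) (k : ℕ) :
    ∃ y, π ∣ y - x ∧ π ^ (k + 1) ∣ a * y ^ 2 - e := by
  induction k with
  | zero => exact ⟨x, by simp, by simpa using he⟩
  | succ k ih =>
    obtain ⟨y, ⟨w, hw⟩, m, hm⟩ := ih
    obtain ⟨u, v, huv⟩ : IsCoprime (2 * a * y) π := by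
      simpa only [show 2 * a * x + π * (2 * a * w) = 2 * a * y by linear_combination -2 * a * hw]
        using hx.add_mul_left_left (2 * a * w)
    -- Newton step: `u` inverts `2 * a * y` modulo `π`, so the correction `π ^ (k + 1) * m * u`
    -- cancels the error `π ^ (k + 1) * m` modulo `π ^ (k + 2)`.
    refine ⟨y - π ^ (k + 1) * m * u, ⟨w - π ^ k * m * u, by linear_combination hw⟩,
      m * v + a * π ^ k * m ^ 2 * u ^ 2, by linear_combination hm - π ^ (k + 1) * m * huv⟩

namespace ZMod

theorem natCast_dvd_of_castHom_eq_zero {p n : ℕ} [NeZero n] (h : p ∣ n) {z : ZMod n}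
    (hz : castHom h (ZMod p) z = 0) : (p : ZMod n) ∣ z := by
  rw [castHom_apply, cast_eq_val, natCast_eq_zero_iff] at hz
  obtain ⟨k, hk⟩ := hz
  exact ⟨k, by rw [← natCast_zmod_val z, hk, Nat.cast_mul]⟩

variable {p r : ℕ} [hp : Fact p.Prime]

theorem isUnit_iff_castHom_ne_zero (hr : r ≠ 0) (z : ZMod (p ^ r)) :
    IsUnit z ↔ castHom (dvd_pow_self p hr) (ZMod p) z ≠ 0 := by
  rw [castHom_apply, cast_eq_val, Ne, natCast_eq_zero_iff,
    ← isUnit_natCast_iff_not_dvd_pow hp.out (Nat.pos_of_ne_zero hr), natCast_zmod_val]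

theorem natCast_dvd_of_not_isUnit (hr : r ≠ 0) {z : ZMod (p ^ r)} (hz : ¬IsUnit z) :
    (p : ZMod (p ^ r)) ∣ z :=
  natCast_dvd_of_castHom_eq_zero _ (not_not.1 ((isUnit_iff_castHom_ne_zero hr z).not.1 hz))

theorem isUnit_or_eq_natCast_mul_isUnit_or_sq_dvd (hr : r ≠ 0) (z : ZMod (p ^ r)) :
    IsUnit z ∨ (∃ v, IsUnit v ∧ z = p * v) ∨ (p : ZMod (p ^ r)) ^ 2 ∣ z := by
  by_cases hz : IsUnit z
  · exact Or.inl hz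
  obtain ⟨w, rfl⟩ := natCast_dvd_of_not_isUnit hr hz
  by_cases hw : IsUnit w
  · exact Or.inr (Or.inl ⟨w, hw, rfl⟩)
  obtain ⟨v, rfl⟩ := natCast_dvd_of_not_isUnit hr hw
  exact Or.inr (Or.inr ⟨v, by ring⟩)

theorem le_two_mul_card_image_mul_sq {a : ZMod p} (ha : a ≠ 0) :
    p - 1 ≤ 2 * #((univ.erase 0).image (a * · ^ 2)) := by
  have hcard : #(univ.erase (0 : ZMod p)) = p - 1 := by
    rw [card_erase_of_mem (mem_univ _), card_univ, card]
  refine hcard ▸ card_le_mul_card_image _ 2 fun b hb => ?_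
  obtain ⟨x₀, -, rfl⟩ := mem_image.1 hb
  refine (card_le_card fun x hx => ?_).trans (card_insert_le x₀ {-x₀})
  have hsq := mul_left_cancel₀ ha (mem_filter.1 hx).2
  rcases sq_eq_sq_iff_eq_or_eq_neg.1 hsq with rfl | rfl <;> simp

theorem exists_ne_zero_mul_sq_add_mul_sq_add_mul_sq_eq (hp7 : 7 ≤ p) {a b c : ZMod p}
    (ha : a ≠ 0) (hb : b ≠ 0) (hc : c ≠ 0) (d : ZMod p) :
    ∃ x y z : ZMod p, x ≠ 0 ∧ y ≠ 0 ∧ z ≠ 0 ∧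
      a * x ^ 2 + b * y ^ 2 + c * z ^ 2 = d := by
  set Q : ZMod p → Finset (ZMod p) := fun a => (univ.erase 0).image (a * · ^ 2)
  have hQ : ∀ a, (Q a).Nonempty := fun a => ⟨a * 1 ^ 2, mem_image_of_mem _ (by simp)⟩
  have h₁ := cauchy_davenport hp.out (hQ a) (hQ b)
  have h₂ := cauchy_davenport hp.out ((hQ a).add (hQ b)) (hQ c)
  have hcard : p ≤ #(Q a + Q b + Q c) := by
    have hQa : p - 1 ≤ 2 * #(Q a) := le_two_mul_card_image_mul_sq ha
    have hQb : p - 1 ≤ 2 * #(Q b) := le_two_mul_card_image_mul_sq hb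
    have hQc : p - 1 ≤ 2 * #(Q c) := le_two_mul_card_image_mul_sq hc
    simp only [min_def] at h₁ h₂
    split_ifs at h₁ h₂ <;> omega
  have huniv : Q a + Q b + Q c = univ :=
    eq_univ_of_card _ (le_antisymm (card_le_univ _) (by rwa [card]))
  obtain ⟨_, hxy, _, hz, hd⟩ := mem_add.1 (huniv ▸ mem_univ d)
  obtain ⟨_, hx, _, hy, rfl⟩ := mem_add.1 hxy
  obtain ⟨x, hx₀, rfl⟩ := mem_image.1 hx
  obtain ⟨y, hy₀, rfl⟩ := mem_image.1 hy
  obtain ⟨z, hz₀, rfl⟩ := mem_image.1 hz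
  exact ⟨x, y, z, ne_of_mem_erase hx₀, ne_of_mem_erase hy₀, ne_of_mem_erase hz₀, hd⟩

theorem exists_isUnit_mul_sq_add_mul_sq_add_mul_sq_eq (hp7 : 7 ≤ p) (hr : r ≠ 0)
    {a b c : ZMod (p ^ r)} (ha : IsUnit a) (hb : IsUnit b) (hc : IsUnit c) (d : ZMod (p ^ r)) :
    ∃ x y z : ZMod (p ^ r), IsUnit x ∧ IsUnit y ∧ IsUnit z ∧
      a * x ^ 2 + b * y ^ 2 + c * z ^ 2 = d := by
  set φ := castHom (dvd_pow_self p hr) (ZMod p)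
  have hunit := isUnit_iff_castHom_ne_zero (p := p) hr
  obtain ⟨X, Y, Z, hX, hY, hZ, hXYZ⟩ := exists_ne_zero_mul_sq_add_mul_sq_add_mul_sq_eq hp7
    ((hunit a).1 ha) ((hunit b).1 hb) ((hunit c).1 hc) (φ d)
  obtain ⟨x₀, rfl⟩ := ringHom_surjective φ X
  obtain ⟨y, rfl⟩ := ringHom_surjective φ Y
  obtain ⟨z, rfl⟩ := ringHom_surjective φ Z
  have hφp : φ p = 0 := by simp [φ]
  have hdvd : (p : ZMod (p ^ r)) ∣ a * x₀ ^ 2 - (d - b * y ^ 2 - c * z ^ 2) :=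
    natCast_dvd_of_castHom_eq_zero _ <| by
      simp only [map_sub, map_mul, map_pow]
      linear_combination hXYZ
  have h2 : IsUnit (2 : ZMod (p ^ r)) := by
    rw [hunit, map_ofNat, ← Nat.cast_ofNat, Ne, natCast_eq_zero_iff]
    exact fun h => absurd (Nat.le_of_dvd two_pos h) (by omega)
  have hcop : IsCoprime (2 * a * x₀) (p : ZMod (p ^ r)) := by
    have hu := (h2.mul ha).mul ((hunit x₀).2 hX)
    exact ⟨↑hu.unit⁻¹, 0, by simp⟩
  obtain ⟨x, ⟨w, hw⟩, hx⟩ := hcop.exists_dvd_sub_and_pow_dvd_mul_sq_sub hdvd (r - 1)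
  rw [Nat.sub_add_cancel (Nat.pos_of_ne_zero hr), ← Nat.cast_pow, natCast_self, zero_dvd_iff,
    sub_eq_zero] at hx
  refine ⟨x, y, z, ?_, (hunit y).2 hY, (hunit z).2 hZ, by linear_combination hx⟩
  rwa [hunit, show x = x₀ + p * w by linear_combination hw, map_add, map_mul, hφp, zero_mul,
    add_zero]

end ZMod

theorem unitSquares_subset_nonzeroSquares {n : ℕ} (hn : n ≠ 1) :
    unitSquares n ⊆ nonzeroSquares n := by
  have := ZMod.nontrivial_iff.2 hn
  rintro _ ⟨u, rfl⟩
  exact ⟨(u ^ 2).ne_zero, u, rfl⟩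

theorem IsWeightedZeroSum.hasConsecWZS {n k : ℕ} {A : Set (ZMod n)} {x : Fin k → ZMod n}
    (h : IsWeightedZeroSum A x) : HasConsecWZS A x := by
  obtain ⟨hk, w, hwA, hw⟩ := h
  obtain ⟨k, rfl⟩ := Nat.exists_eq_add_one_of_ne_zero hk.ne'
  have hIcc : Icc 0 (Fin.last k) = univ :=
    eq_univ_of_forall fun t => mem_Icc.2 ⟨Fin.zero_le t, Fin.le_last t⟩
  exact ⟨0, Fin.last k, Fin.zero_le _, w, fun t _ => hwA t, hIcc ▸ hw⟩

theorem hasConsecWZS_of_mul_eq_zero {n k : ℕ} {A : Set (ZMod n)} {x : Fin k → ZMod n}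
    {q : ZMod n} (hq : q ∈ A) {t : Fin k} (ht : q * x t = 0) : HasConsecWZS A x :=
  ⟨t, t, le_rfl, fun _ => q, fun _ _ => hq, by rwa [Icc_self, sum_singleton]⟩

section
variable {p r : ℕ} [hp : Fact p.Prime]

theorem isWeightedZeroSum_nonzeroSquares_of_card_eq_three (hp7 : 7 ≤ p) (hr : r ≠ 0) {k : ℕ}
    {x u : Fin k → ZMod (p ^ r)} {T : Finset (Fin k)} (hT : #T = 3)
    {π c s : ZMod (p ^ r)} (hu : ∀ t ∈ T, IsUnit (u t) ∧ x t = π * u t)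
    (hc : c ∈ nonzeroSquares (p ^ r)) (hs : c * ∑ t ∈ univ \ T, x t = π * s) :
    IsWeightedZeroSum (nonzeroSquares (p ^ r)) x := by
  obtain ⟨i, j, l, hij, hil, hjl, rfl⟩ := card_eq_three.1 hT
  obtain ⟨hui, hxi⟩ := hu i (by simp)
  obtain ⟨huj, hxj⟩ := hu j (by simp)
  obtain ⟨hul, hxl⟩ := hu l (by simp)
  obtain ⟨α, β, γ, hα, hβ, hγ, hαβγ⟩ :=
    ZMod.exists_isUnit_mul_sq_add_mul_sq_add_mul_sq_eq hp7 hr hui huj hul (-s)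
  have hsq : ∀ {v : ZMod (p ^ r)}, IsUnit v → v ^ 2 ∈ nonzeroSquares (p ^ r) := fun hv =>
    unitSquares_subset_nonzeroSquares (Nat.one_lt_pow hr hp.out.one_lt).ne'
      ⟨hv.unit, by simp⟩
  set w : Fin k → ZMod (p ^ r) := fun t =>
    if t = i then α ^ 2 else if t = j then β ^ 2 else if t = l then γ ^ 2 else c with hw
  refine ⟨i.pos, w, fun t => ?_, ?_⟩
  · simp only [hw]
    split_ifs
    exacts [hsq hα, hsq hβ, hsq hγ, hc]
  have hrest : ∑ t ∈ univ \ {i, j, l}, w t * x t = c * ∑ t ∈ univ \ {i, j, l}, x t := by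
    rw [mul_sum]
    refine sum_congr rfl fun t ht => ?_
    simp only [mem_sdiff, mem_insert, mem_singleton, not_or] at ht
    simp [hw, ht.2.1, ht.2.2.1, ht.2.2.2]
  rw [← sum_sdiff (subset_univ {i, j, l}), hrest, hs, sum_insert (by simp [hij, hil]),
    sum_pair hjl, hxi, hxj, hxl]
  simp only [hw, if_pos, if_neg hij.symm, if_neg hil.symm, if_neg hjl.symm]
  linear_combination π * hαβγ

theorem natCast_pow_sub_two_mem_nonzeroSquares (hr : r ≠ 0) (hre : Even r) :
    (p : ZMod (p ^ r)) ^ (r - 2) ∈ nonzeroSquares (p ^ r) := by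
  obtain ⟨m, rfl⟩ := hre
  refine ⟨fun h => ?_, (p : ZMod (p ^ (m + m))) ^ (m - 1), by rw [← pow_mul]; congr 1; omega⟩
  rw [← Nat.cast_pow, ZMod.natCast_eq_zero_iff,
    Nat.pow_dvd_pow_iff_le_right hp.out.one_lt] at h
  omega

theorem hasConsecWZS_nonzeroSquares (hp7 : 7 ≤ p) (hr : 4 ≤ r) (hre : Even r) {k : ℕ}
    (hk : 5 ≤ k) (x : Fin k → ZMod (p ^ r)) : HasConsecWZS (nonzeroSquares (p ^ r)) x := by
  have : Fact (1 < p ^ r) := ⟨Nat.one_lt_pow (by omega) hp.out.one_lt⟩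
  have hq := natCast_pow_sub_two_mem_nonzeroSquares (p := p) (by omega) hre
  by_cases hdvd : ∃ t, (p : ZMod (p ^ r)) ^ 2 ∣ x t
  · obtain ⟨t, y, hy⟩ := hdvd
    refine hasConsecWZS_of_mul_eq_zero hq (t := t) ?_
    rw [hy, ← mul_assoc, ← pow_add, Nat.sub_add_cancel (by omega), ← Nat.cast_pow,
      ZMod.natCast_self, zero_mul]
  push Not at hdvd
  have hcl : ∀ t, ¬IsUnit (x t) → ∃ v, IsUnit v ∧ x t = p * v := fun t ht =>
    ((ZMod.isUnit_or_eq_natCast_mul_isUnit_or_sq_dvd (by omega) (x t)).resolve_left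
      ht).resolve_right (hdvd t)
  choose! v hv using hcl
  have hcard := card_filter_add_card_filter_not (s := univ) fun t => IsUnit (x t)
  rw [card_univ, Fintype.card_fin] at hcard
  obtain hU | hV : 3 ≤ #{t | IsUnit (x t)} ∨ 3 ≤ #{t | ¬IsUnit (x t)} := by omega
  · obtain ⟨T, hTU, hT⟩ := exists_subset_card_eq hU
    exact (isWeightedZeroSum_nonzeroSquares_of_card_eq_three hp7 (by omega) hT (π := 1)
      (fun t ht => ⟨(mem_filter.1 (hTU ht)).2, (one_mul _).symm⟩)
      ⟨one_ne_zero, 1, one_pow 2⟩ rfl).hasConsecWZS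
  · obtain ⟨T, hTV, hT⟩ := exists_subset_card_eq hV
    have hs : (p : ZMod (p ^ r)) ^ (r - 2) * ∑ t ∈ univ \ T, x t
        = p * (p ^ (r - 3) * ∑ t ∈ univ \ T, x t) := by
      rw [← mul_assoc, ← pow_succ', show r - 3 + 1 = r - 2 by omega]
    exact (isWeightedZeroSum_nonzeroSquares_of_card_eq_three hp7 (by omega) hT
      (fun t ht => hv t (mem_filter.1 (hTV ht)).2) hq hs).hasConsecWZS

end

theorem stmt19 (p : ℕ) (hp : p.Prime) (hp7 : 7 ≤ p) (r : ℕ) (hr : 4 ≤ r) (hre : Even r) :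
    (∀ x : Fin 5 → ZMod (p ^ r), HasConsecWZS (nonzeroSquares (p ^ r)) x) ∧
    sInf {k | CConst (p ^ r) (nonzeroSquares (p ^ r)) k} ≤ 5 := by
  have : Fact p.Prime := ⟨hp⟩
  have h5 := hasConsecWZS_nonzeroSquares hp7 hr hre le_rfl
  exact ⟨h5, Nat.sInf_le ⟨by norm_num, h5⟩⟩
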